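/- arXiv:1511.00128 — 6 statements merged into one kernel-verified Lean document; each statement's English description precedes it below -/
import Mathlib

section
/- Monotonicity of extremal depth with respect to the ordering: Let f, g : I → ℝ be Borel measurable with f ≻ g. Then {x ∈ C(I,ℝ) : g ⪰ x} ⊆ {x ∈ C(I,ℝ) : f ⪰ x}; in particular, ED(f,P) ≥ ED(g,P). -/
open MeasureTheory Set Filter
open scoped NNReal ENNReal symmDiff

noncomputable section

/-- The space `C(I, ℝ)` of continuous real-valued functions on `I = [0,1]`,
equipped with the sup metric. -/
abbrev FSp := C(unitInterval, ℝ)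

/-- Borel σ-algebra on `C(I, ℝ)`. -/
instance : MeasurableSpace FSp := borel FSp
instance : BorelSpace FSp := ⟨rfl⟩

/-- Pointwise depth `D_g(t) = 1 - |P{x : x(t) > g(t)} - P{x : x(t) < g(t)}|`. -/
def pdepth (P : Measure FSp) (g : unitInterval → ℝ) (t : unitInterval) : ℝ :=
  1 - |(P {x : FSp | g t < x t}).toReal - (P {x : FSp | x t < g t}).toReal|

/-- Depth CDF (d-CDF) `Φ_g(r) = Leb{t ∈ I : D_g(t) ≤ r}`. -/
def dcdf (P : Measure FSp) (g : unitInterval → ℝ) (r : ℝ) : ℝ :=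
  (volume {t : unitInterval | pdepth P g t ≤ r}).toReal

/-- The set `R(g,h) = {r ∈ [0,1] : Φ_g(r) ≠ Φ_h(r)}`. -/
def Rset (P : Measure FSp) (g h : unitInterval → ℝ) : Set ℝ :=
  {r ∈ Icc (0:ℝ) 1 | dcdf P g r ≠ dcdf P h r}

/-- `g ≺ h`: `g` is more extreme than `h`, i.e. `R(g,h)` is nonempty and, with
`r* = inf R(g,h)`, there is `δ > 0` with `Φ_g(r) > Φ_h(r)` for all
`r ∈ (r*, r*+δ) ∩ [0,1]`.  `g ⪰ h` is `¬ prec P g h`. -/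
def prec (P : Measure FSp) (g h : unitInterval → ℝ) : Prop :=
  (Rset P g h).Nonempty ∧
  ∃ δ > 0, ∀ r ∈ Ioo (sInf (Rset P g h)) (sInf (Rset P g h) + δ) ∩ Icc (0:ℝ) 1,
    dcdf P h r < dcdf P g r

/-- Extremal depth `ED(g,P) = P*{x ∈ C(I,ℝ) : g ⪰ x}` (a measure applied to an
arbitrary set is the induced outer measure). -/
def ed (P : Measure FSp) (g : unitInterval → ℝ) : ℝ :=
  (P {x : FSp | ¬ prec P g ⇑x}).toReal

/-- Minimal depth level `d_f = inf{r ∈ [0,1] : Φ_f(r) > 0}`. -/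
def dmin (P : Measure FSp) (f : unitInterval → ℝ) : ℝ :=
  sInf {r ∈ Icc (0:ℝ) 1 | 0 < dcdf P f r}

/-- Marginal CDF `F_t(y) = P{x : x(t) ≤ y}`. -/
def margF (P : Measure FSp) (t : unitInterval) (y : ℝ) : ℝ :=
  (P {x : FSp | x t ≤ y}).toReal

/-- Pointwise quantile function `q_a(t) = inf{y : F_t(y) ≥ a}`. -/
def quant (P : Measure FSp) (a : ℝ) (t : unitInterval) : ℝ :=
  sInf {y : ℝ | a ≤ margF P t y}

/-- Lower envelope `f_L(t) = inf{f(t) : f ∈ C(I,ℝ), ED(f,P) > α}`. -/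
def envL (P : Measure FSp) (α : ℝ) (t : unitInterval) : ℝ :=
  sInf ((fun f : FSp => f t) '' {f : FSp | α < ed P ⇑f})

/-- Upper envelope `f_U(t) = sup{f(t) : f ∈ C(I,ℝ), ED(f,P) > α}`. -/
def envU (P : Measure FSp) (α : ℝ) (t : unitInterval) : ℝ :=
  sSup ((fun f : FSp => f t) '' {f : FSp | α < ed P ⇑f})

/-- The `(1-α)` extremal-depth central region `C_{1-α}`. -/
def centralRegion (P : Measure FSp) (α : ℝ) : Set FSp :=
  {x : FSp | ∀ t, envL P α t ≤ x t ∧ x t ≤ envU P α t}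

/-- Boundary `∂C_{1-α}` of the central region. -/
def centralBoundary (P : Measure FSp) (α : ℝ) : Set FSp :=
  {x ∈ centralRegion P α | ∃ t, x t = envL P α t ∨ x t = envU P α t}

lemma dcdf_one_aux (P : Measure FSp) (g : unitInterval → ℝ) :
    dcdf P g 1 = (volume (Set.univ : Set unitInterval)).toReal := by
  unfold dcdf
  congr 2
  ext t
  simp only [mem_setOf_eq, mem_univ, iff_true, pdepth]
  have := abs_nonneg ((P {x : FSp | g t < x t}).toReal - (P {x : FSp | x t < g t}).toReal)
  linarith

lemma Rset_lt_one {P : Measure FSp} {g h : unitInterval → ℝ} {r : ℝ}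
    (hr : r ∈ Rset P g h) : r < 1 := by
  obtain ⟨⟨_, h1⟩, hne⟩ := hr
  rcases lt_or_eq_of_le h1 with h | h
  · exact h
  · exfalso; apply hne; rw [h, dcdf_one_aux, dcdf_one_aux]

lemma Rset_bddBelow (P : Measure FSp) (g h : unitInterval → ℝ) :
    BddBelow (Rset P g h) := ⟨0, fun r hr => hr.1.1⟩

lemma dcdf_eq_of_lt_sInf {P : Measure FSp} {g h : unitInterval → ℝ} {r : ℝ}
    (h0 : 0 ≤ r) (h1 : r ≤ 1) (hr : r < sInf (Rset P g h)) :
    dcdf P g r = dcdf P h r := by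
  by_contra hne
  have : r ∈ Rset P g h := ⟨⟨h0, h1⟩, hne⟩
  exact absurd (csInf_le (Rset_bddBelow P g h) this) (not_le.mpr hr)

lemma sInf_Rset_nonneg {P : Measure FSp} {g h : unitInterval → ℝ}
    (hne : (Rset P g h).Nonempty) : 0 ≤ sInf (Rset P g h) :=
  le_csInf hne fun r hr => hr.1.1

lemma sInf_Rset_lt_one {P : Measure FSp} {g h : unitInterval → ℝ}
    (hne : (Rset P g h).Nonempty) : sInf (Rset P g h) < 1 := by
  obtain ⟨r, hr⟩ := hne
  exact lt_of_le_of_lt (csInf_le (Rset_bddBelow P g h) hr) (Rset_lt_one hr)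

lemma prec_intro (P : Measure FSp) (g x : unitInterval → ℝ) (s δ : ℝ) (hδ : 0 < δ)
    (hs0 : 0 ≤ s) (hs1 : s < 1)
    (heq : ∀ r, 0 ≤ r → r < s → dcdf P g r = dcdf P x r)
    (hgt : ∀ r ∈ Ioo s (s + δ) ∩ Icc (0:ℝ) 1, dcdf P x r < dcdf P g r) :
    prec P g x := by
  have hmem : ∀ ε : ℝ, 0 < ε →
      s + min (min δ ε) (1 - s) / 2 ∈ Ioo s (s + δ) ∩ Icc (0:ℝ) 1 := by
    intro ε hε
    have hpos : 0 < min (min δ ε) (1 - s) := lt_min (lt_min hδ hε) (by linarith)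
    constructor
    · constructor
      · linarith
      · have : min (min δ ε) (1 - s) ≤ δ := le_trans (min_le_left _ _) (min_le_left _ _)
        linarith
    · constructor
      · linarith
      · have : min (min δ ε) (1 - s) ≤ 1 - s := min_le_right _ _
        linarith
  have hRmem : ∀ ε : ℝ, 0 < ε → s + min (min δ ε) (1 - s) / 2 ∈ Rset P g x := by
    intro ε hε
    have h1 := hmem ε hε
    exact ⟨h1.2, fun h => absurd (hgt _ h1) (by rw [h]; exact lt_irrefl _)⟩
  have hne : (Rset P g x).Nonempty := ⟨_, hRmem 1 one_pos⟩
  have hlb : s ≤ sInf (Rset P g x) := by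
    apply le_csInf hne
    intro r hr
    by_contra hlt
    push_neg at hlt
    exact hr.2 (heq r hr.1.1 hlt)
  have hub : sInf (Rset P g x) ≤ s := by
    apply le_of_forall_pos_le_add
    intro ε hε
    calc sInf (Rset P g x) ≤ s + min (min δ ε) (1 - s) / 2 :=
          csInf_le (Rset_bddBelow P g x) (hRmem ε hε)
      _ ≤ s + ε := by
          have h1 : min (min δ ε) (1 - s) ≤ ε := le_trans (min_le_left _ _) (min_le_right _ _)
          linarith
  have hsInf : sInf (Rset P g x) = s := le_antisymm hub hlb
  exact ⟨hne, δ, hδ, by rw [hsInf]; exact hgt⟩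

lemma prec_trans (P : Measure FSp) {g f x : unitInterval → ℝ}
    (h1 : prec P g f) (h2 : prec P f x) : prec P g x := by
  obtain ⟨hne1, δ1, hδ1, hlt1⟩ := h1
  obtain ⟨hne2, δ2, hδ2, hlt2⟩ := h2
  set s1 := sInf (Rset P g f) with hs1def
  set s2 := sInf (Rset P f x) with hs2def
  have hs10 : 0 ≤ s1 := sInf_Rset_nonneg hne1
  have hs11 : s1 < 1 := sInf_Rset_lt_one hne1
  have hs20 : 0 ≤ s2 := sInf_Rset_nonneg hne2
  have hs21 : s2 < 1 := sInf_Rset_lt_one hne2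
  have heq1 : ∀ r, 0 ≤ r → r ≤ 1 → r < s1 → dcdf P g r = dcdf P f r :=
    fun r h0 h1 hr => dcdf_eq_of_lt_sInf h0 h1 hr
  have heq2 : ∀ r, 0 ≤ r → r ≤ 1 → r < s2 → dcdf P f r = dcdf P x r :=
    fun r h0 h1 hr => dcdf_eq_of_lt_sInf h0 h1 hr
  rcases lt_trichotomy s1 s2 with hc | hc | hc
  · -- s1 < s2
    apply prec_intro P g x s1 (min δ1 (s2 - s1)) (lt_min hδ1 (by linarith)) hs10 hs11
    · intro r h0 hr
      rw [heq1 r h0 (by linarith) hr, heq2 r h0 (by linarith) (by linarith)]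
    · rintro r ⟨⟨hra, hrb⟩, hrc⟩
      have hrδ1 : r < s1 + δ1 := lt_of_lt_of_le hrb (by
        have := min_le_left δ1 (s2 - s1); linarith)
      have hrs2 : r < s2 := lt_of_lt_of_le hrb (by
        have := min_le_right δ1 (s2 - s1); linarith)
      rw [← heq2 r hrc.1 hrc.2 hrs2]
      exact hlt1 r ⟨⟨hra, hrδ1⟩, hrc⟩
  · -- s1 = s2
    apply prec_intro P g x s1 (min δ1 δ2) (lt_min hδ1 hδ2) hs10 hs11
    · intro r h0 hr
      rw [heq1 r h0 (by linarith) hr, heq2 r h0 (by linarith) (by rw [← hc]; exact hr)]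
    · rintro r ⟨⟨hra, hrb⟩, hrc⟩
      have hrδ1 : r < s1 + δ1 := lt_of_lt_of_le hrb (by have := min_le_left δ1 δ2; linarith)
      have hrδ2 : r < s2 + δ2 := lt_of_lt_of_le hrb (by
        have := min_le_right δ1 δ2; rw [← hc]; linarith)
      exact lt_trans (hlt2 r ⟨⟨hc ▸ hra, hrδ2⟩, hrc⟩) (hlt1 r ⟨⟨hra, hrδ1⟩, hrc⟩)
  · -- s2 < s1
    apply prec_intro P g x s2 (min δ2 (s1 - s2)) (lt_min hδ2 (by linarith)) hs20 hs21
    · intro r h0 hr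
      rw [heq1 r h0 (by linarith) (by linarith), heq2 r h0 (by linarith) hr]
    · rintro r ⟨⟨hra, hrb⟩, hrc⟩
      have hrδ2 : r < s2 + δ2 := lt_of_lt_of_le hrb (by
        have := min_le_left δ2 (s1 - s2); linarith)
      have hrs1 : r < s1 := lt_of_lt_of_le hrb (by
        have := min_le_right δ2 (s1 - s2); linarith)
      rw [heq1 r hrc.1 hrc.2 hrs1]
      exact hlt2 r ⟨⟨hra, hrδ2⟩, hrc⟩

/-- **Monotonicity of extremal depth with respect to the ordering.** -/
theorem ed_mono_of_succ (P : Measure FSp) [IsProbabilityMeasure P]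
    (f g : unitInterval → ℝ) (hf : Measurable f) (hg : Measurable g)
    (hfg : prec P g f) :
    {x : FSp | ¬ prec P g ⇑x} ⊆ {x : FSp | ¬ prec P f ⇑x} ∧ ed P g ≤ ed P f := by
  have hsub : {x : FSp | ¬ prec P g ⇑x} ⊆ {x : FSp | ¬ prec P f ⇑x} := by
    intro x hx hpfx
    exact hx (prec_trans P hfg hpfx)
  refine ⟨hsub, ?_⟩
  exact ENNReal.toReal_mono (measure_ne_top P _) (measure_mono hsub)
end
end

section
/- Minimal depth level determines strict ordering: Let f, g : I → ℝ be Borel measurable. If d_f > d_g, then f ≻ g. Consequently, if f ⪰ g, then d_f ≥ d_g. -/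
open MeasureTheory Set Filter
open scoped NNReal ENNReal symmDiff

noncomputable section

lemma pdepth_mem (P : Measure FSp) [IsProbabilityMeasure P] (g : unitInterval → ℝ)
    (t : unitInterval) : pdepth P g t ∈ Icc (0:ℝ) 1 := by
  have ha : (P {x : FSp | g t < x t}).toReal ≤ 1 := by
    have := ENNReal.toReal_mono (by simp) (prob_le_one (μ := P) (s := {x : FSp | g t < x t}))
    simpa using this
  have hb : (P {x : FSp | x t < g t}).toReal ≤ 1 := by
    have := ENNReal.toReal_mono (by simp) (prob_le_one (μ := P) (s := {x : FSp | x t < g t}))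
    simpa using this
  have ha0 : (0:ℝ) ≤ (P {x : FSp | g t < x t}).toReal := ENNReal.toReal_nonneg
  have hb0 : (0:ℝ) ≤ (P {x : FSp | x t < g t}).toReal := ENNReal.toReal_nonneg
  constructor
  · have : |(P {x : FSp | g t < x t}).toReal - (P {x : FSp | x t < g t}).toReal| ≤ 1 :=
      abs_le.mpr ⟨by linarith, by linarith⟩
    simp only [pdepth]; linarith
  · simp only [pdepth]
    have := abs_nonneg ((P {x : FSp | g t < x t}).toReal - (P {x : FSp | x t < g t}).toReal)
    linarith

lemma dcdf_nonneg (P : Measure FSp) (g : unitInterval → ℝ) (r : ℝ) : 0 ≤ dcdf P g r :=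
  ENNReal.toReal_nonneg

lemma dcdf_mono (P : Measure FSp) (g : unitInterval → ℝ) {r s : ℝ} (h : r ≤ s) :
    dcdf P g r ≤ dcdf P g s := by
  apply ENNReal.toReal_mono (measure_ne_top _ _)
  exact measure_mono (fun t ht => le_trans ht h)

lemma dcdf_one (P : Measure FSp) [IsProbabilityMeasure P] (g : unitInterval → ℝ) :
    dcdf P g 1 = 1 := by
  have : {t : unitInterval | pdepth P g t ≤ 1} = univ := by
    ext t; simp [(pdepth_mem P g t).2]
  simp [dcdf, this]

/-- The defining set of `dmin`. -/
lemma dmin_set_nonempty (P : Measure FSp) [IsProbabilityMeasure P] (g : unitInterval → ℝ) :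
    (1:ℝ) ∈ {r ∈ Icc (0:ℝ) 1 | 0 < dcdf P g r} := by
  refine ⟨by norm_num, ?_⟩
  rw [dcdf_one]; norm_num

lemma dmin_set_bdd (P : Measure FSp) (g : unitInterval → ℝ) :
    BddBelow {r ∈ Icc (0:ℝ) 1 | 0 < dcdf P g r} :=
  ⟨0, fun r hr => hr.1.1⟩

lemma dmin_nonneg (P : Measure FSp) [IsProbabilityMeasure P] (g : unitInterval → ℝ) :
    0 ≤ dmin P g :=
  le_csInf ⟨1, dmin_set_nonempty P g⟩ (fun r hr => hr.1.1)

lemma dmin_le_one (P : Measure FSp) [IsProbabilityMeasure P] (g : unitInterval → ℝ) :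
    dmin P g ≤ 1 :=
  csInf_le (dmin_set_bdd P g) (dmin_set_nonempty P g)

lemma dcdf_pos_of_dmin_lt (P : Measure FSp) [IsProbabilityMeasure P] (g : unitInterval → ℝ)
    {r : ℝ} (h : dmin P g < r) : 0 < dcdf P g r := by
  obtain ⟨r', hr', hlt⟩ := exists_lt_of_csInf_lt ⟨1, dmin_set_nonempty P g⟩ h
  exact lt_of_lt_of_le hr'.2 (dcdf_mono P g hlt.le)

lemma dcdf_eq_zero_of_lt_dmin (P : Measure FSp) [IsProbabilityMeasure P] (g : unitInterval → ℝ)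
    {r : ℝ} (hr : r ∈ Icc (0:ℝ) 1) (h : r < dmin P g) : dcdf P g r = 0 := by
  by_contra hne
  have hpos : 0 < dcdf P g r := lt_of_le_of_ne (dcdf_nonneg P g r) (Ne.symm hne)
  exact absurd (csInf_le (dmin_set_bdd P g) ⟨hr, hpos⟩) (not_le.mpr h)

lemma prec_of_dmin_lt_aux (P : Measure FSp) [IsProbabilityMeasure P]
    (f g : unitInterval → ℝ) (hlt : dmin P g < dmin P f) : prec P g f := by
  set dg := dmin P g
  set df := dmin P f
  have hdg0 : 0 ≤ dg := dmin_nonneg P g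
  have hdf1 : df ≤ 1 := dmin_le_one P f
  set r0 : ℝ := (dg + df) / 2 with hr0
  have h1 : dg < r0 := by simp [hr0]; linarith
  have h2 : r0 < df := by simp [hr0]; linarith
  have hr0mem : r0 ∈ Icc (0:ℝ) 1 := ⟨by linarith, by linarith⟩
  have hgpos : 0 < dcdf P g r0 := dcdf_pos_of_dmin_lt P g h1
  have hfzero : dcdf P f r0 = 0 := dcdf_eq_zero_of_lt_dmin P f hr0mem h2
  have hr0R : r0 ∈ Rset P g f := ⟨hr0mem, by rw [hfzero]; exact ne_of_gt hgpos⟩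
  have hne : (Rset P g f).Nonempty := ⟨r0, hr0R⟩
  have hbdd : BddBelow (Rset P g f) := ⟨0, fun r hr => hr.1.1⟩
  set rs := sInf (Rset P g f) with hrs
  have hrsle : rs ≤ r0 := csInf_le hbdd hr0R
  have hdgrs : dg ≤ rs := by
    apply le_csInf hne
    intro r hr
    by_contra hc
    push_neg at hc
    have hzg : dcdf P g r = 0 := dcdf_eq_zero_of_lt_dmin P g hr.1 hc
    have hzf : dcdf P f r = 0 := dcdf_eq_zero_of_lt_dmin P f hr.1 (hc.trans hlt)
    exact hr.2 (hzg.trans hzf.symm)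
  refine ⟨hne, df - rs, by linarith, ?_⟩
  intro r hr
  obtain ⟨⟨hr1, hr2⟩, hrI⟩ := hr
  have hflt : dcdf P f r = 0 := dcdf_eq_zero_of_lt_dmin P f hrI (by linarith)
  have hgp : 0 < dcdf P g r := dcdf_pos_of_dmin_lt P g (by linarith)
  rw [hflt]; exact hgp

/-- **Minimal depth level determines strict ordering.** If `d_f > d_g` then
`f ≻ g` (i.e. `g ≺ f`); consequently if `f ⪰ g` then `d_f ≥ d_g`. -/
theorem prec_of_dmin_lt (P : Measure FSp) [IsProbabilityMeasure P]
    (f g : unitInterval → ℝ) (hf : Measurable f) (hg : Measurable g) :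
    (dmin P g < dmin P f → prec P g f) ∧
    (¬ prec P f g → dmin P g ≤ dmin P f) := by
  refine ⟨fun h => prec_of_dmin_lt_aux P f g h, fun h => ?_⟩
  by_contra hc
  push_neg at hc
  exact h (prec_of_dmin_lt_aux P g f hc)
end
end

section
/- Sandwiching preserves the minimal depth level: Let f₁, f, f₂ : I → ℝ be Borel measurable with f₁(t) ≤ f(t) ≤ f₂(t) for all t ∈ I. Then d_f ≥ min(d_{f₁}, d_{f₂}). -/
open MeasureTheory Set Filter
open scoped NNReal ENNReal symmDiff

noncomputable section

lemma pdepth_sandwich (P : Measure FSp) [IsProbabilityMeasure P]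
    (f₁ f f₂ : unitInterval → ℝ) (t : unitInterval)
    (h1 : f₁ t ≤ f t) (h2 : f t ≤ f₂ t) :
    min (pdepth P f₁ t) (pdepth P f₂ t) ≤ pdepth P f t := by
  set u : ℝ → ℝ := fun y => (P {x : FSp | y < x t}).toReal with hu
  set v : ℝ → ℝ := fun y => (P {x : FSp | x t < y}).toReal with hv
  have hfin : ∀ s : Set FSp, P s ≠ ⊤ := fun s => measure_ne_top P s
  have hu_anti : ∀ {a b : ℝ}, a ≤ b → u b ≤ u a := by
    intro a b hab
    exact ENNReal.toReal_mono (hfin _) (measure_mono fun x hx => lt_of_le_of_lt hab hx)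
  have hv_mono : ∀ {a b : ℝ}, a ≤ b → v a ≤ v b := by
    intro a b hab
    exact ENNReal.toReal_mono (hfin _) (measure_mono fun x hx => lt_of_lt_of_le hx hab)
  have key : |u (f t) - v (f t)| ≤ max (|u (f₁ t) - v (f₁ t)|) (|u (f₂ t) - v (f₂ t)|) := by
    rw [abs_le]
    constructor
    · have : u (f₂ t) - v (f₂ t) ≤ u (f t) - v (f t) :=
        sub_le_sub (hu_anti h2) (hv_mono h2)
      have h' : -(u (f₂ t) - v (f₂ t)) ≤ |u (f₂ t) - v (f₂ t)| := neg_le_abs _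
      nlinarith [le_max_right (|u (f₁ t) - v (f₁ t)|) (|u (f₂ t) - v (f₂ t)|)]
    · have : u (f t) - v (f t) ≤ u (f₁ t) - v (f₁ t) :=
        sub_le_sub (hu_anti h1) (hv_mono h1)
      have h' : u (f₁ t) - v (f₁ t) ≤ |u (f₁ t) - v (f₁ t)| := le_abs_self _
      nlinarith [le_max_left (|u (f₁ t) - v (f₁ t)|) (|u (f₂ t) - v (f₂ t)|)]
  simp only [pdepth, min_le_iff]
  rcases max_cases (|u (f₁ t) - v (f₁ t)|) (|u (f₂ t) - v (f₂ t)|) with ⟨he, _⟩ | ⟨he, _⟩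
  · left; rw [he] at key; linarith
  · right; rw [he] at key; linarith

/-- **Sandwiching preserves the minimal depth level.** -/
theorem dmin_sandwich (P : Measure FSp) [IsProbabilityMeasure P]
    (f₁ f f₂ : unitInterval → ℝ)
    (hf₁ : Measurable f₁) (hf : Measurable f) (hf₂ : Measurable f₂)
    (hsand : ∀ t : unitInterval, f₁ t ≤ f t ∧ f t ≤ f₂ t) :
    min (dmin P f₁) (dmin P f₂) ≤ dmin P f := by
  set S := fun g : unitInterval → ℝ => {r ∈ Icc (0:ℝ) 1 | 0 < dcdf P g r} with hS
  have hbdd : ∀ g, BddBelow (S g) := fun g => ⟨0, fun r hr => hr.1.1⟩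
  have hone : ∀ g, (1:ℝ) ∈ S g := by
    intro g
    refine ⟨⟨le_refl 0 |>.trans zero_le_one, le_refl 1⟩, ?_⟩
    have : {t : unitInterval | pdepth P g t ≤ 1} = univ := by
      ext t; simp only [mem_setOf_eq, mem_univ, iff_true, pdepth]
      have := abs_nonneg ((P {x : FSp | g t < x t}).toReal - (P {x : FSp | x t < g t}).toReal)
      linarith
    simp only [dcdf, this, measure_univ]
    norm_num
  have hsub : S f ⊆ S f₁ ∪ S f₂ := by
    intro r hr
    obtain ⟨hr01, hpos⟩ := hr
    have hset : {t : unitInterval | pdepth P f t ≤ r} ⊆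
        {t : unitInterval | pdepth P f₁ t ≤ r} ∪ {t : unitInterval | pdepth P f₂ t ≤ r} := by
      intro t ht
      have := pdepth_sandwich P f₁ f f₂ t (hsand t).1 (hsand t).2
      rcases min_le_iff.mp (le_trans this ht) with h | h
      · exact Or.inl h
      · exact Or.inr h
    by_contra hcon
    simp only [mem_union, not_or] at hcon
    obtain ⟨h1, h2⟩ := hcon
    have hz1 : dcdf P f₁ r = 0 := le_antisymm (not_lt.mp fun h => h1 ⟨hr01, h⟩) ENNReal.toReal_nonneg
    have hz2 : dcdf P f₂ r = 0 := le_antisymm (not_lt.mp fun h => h2 ⟨hr01, h⟩) ENNReal.toReal_nonneg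
    have hm1 : volume {t : unitInterval | pdepth P f₁ t ≤ r} = 0 := by
      have := measure_ne_top (volume : Measure unitInterval) {t | pdepth P f₁ t ≤ r}
      simpa [dcdf, ENNReal.toReal_eq_zero_iff, this] using hz1
    have hm2 : volume {t : unitInterval | pdepth P f₂ t ≤ r} = 0 := by
      have := measure_ne_top (volume : Measure unitInterval) {t | pdepth P f₂ t ≤ r}
      simpa [dcdf, ENNReal.toReal_eq_zero_iff, this] using hz2
    have : volume {t : unitInterval | pdepth P f t ≤ r} = 0 :=
      measure_mono_null hset (by rw [measure_union_null_iff]; exact ⟨hm1, hm2⟩)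
    simp [dcdf, this] at hpos
  have : ∀ r ∈ S f, min (dmin P f₁) (dmin P f₂) ≤ r := by
    intro r hr
    rcases hsub hr with h | h
    · exact le_trans (min_le_left _ _) (csInf_le (hbdd f₁) h)
    · exact le_trans (min_le_right _ _) (csInf_le (hbdd f₂) h)
  exact le_csInf ⟨1, hone f⟩ this
end
end

section
/- Continuity of the pointwise depth and dense-set computation of the minimal depth level: Assume every marginal CDF F_t is continuous on ℝ, and that for every u₀ ∈ ℝ there exists ε > 0 such that sup{|F_t(u) − F_s(u)| : t,s ∈ I, |t−s| ≤ δ, |u−u₀| < ε} → 0 as δ → 0⁺. Then for every continuous f : I → ℝ, the map t ↦ D_f(t) is continuous on I; moreover d_f = min_{t∈I} D_f(t), and for every dense subset T ⊆ I, d_f = inf_{t∈T} D_f(t). -/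
open MeasureTheory Set Filter
open scoped NNReal ENNReal symmDiff

noncomputable section

lemma vol_open_pos {U : Set unitInterval} (hU : IsOpen U) (hne : U.Nonempty) :
    0 < (volume U).toReal := by
  have hemb : MeasurableEmbedding (Subtype.val : unitInterval → ℝ) :=
    MeasurableEmbedding.subtype_coe measurableSet_Icc
  obtain ⟨t, ht⟩ := hne
  obtain ⟨V, hVopen, hVeq⟩ := isOpen_induced_iff.1 hU
  have htV : (t : ℝ) ∈ V := by rw [← hVeq] at ht; exact ht
  obtain ⟨ρ, hρ, hball⟩ := Metric.isOpen_iff.1 hVopen t htV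
  have ht1 : (0:ℝ) ≤ t := t.2.1
  have ht2 : (t:ℝ) ≤ 1 := t.2.2
  set a : ℝ := max 0 ((t:ℝ) - ρ) with ha
  set b : ℝ := min 1 ((t:ℝ) + ρ) with hb
  have hab : a < b := max_lt (lt_min one_pos (by linarith)) (lt_min (by linarith) (by linarith))
  have hsub : Ioo a b ⊆ Subtype.val '' U := by
    intro x hx
    have hax : a < x := hx.1
    have hxb : x < b := hx.2
    have h0 : 0 ≤ x := le_of_lt (lt_of_le_of_lt (le_max_left _ _) hax)
    have h1 : x ≤ 1 := le_of_lt (lt_of_lt_of_le hxb (min_le_left _ _))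
    have hx1 : (t:ℝ) - ρ < x := lt_of_le_of_lt (le_max_right _ _) hax
    have hx2 : x < (t:ℝ) + ρ := lt_of_lt_of_le hxb (min_le_right _ _)
    refine ⟨⟨x, h0, h1⟩, ?_, rfl⟩
    have : x ∈ Metric.ball (t:ℝ) ρ := by
      rw [Metric.mem_ball, Real.dist_eq, abs_lt]; constructor <;> linarith
    have hxV : x ∈ V := hball this
    show (⟨x, h0, h1⟩ : unitInterval) ∈ U
    rw [← hVeq]; exact hxV
  have hle : volume (Ioo a b) ≤ volume U := by
    rw [unitInterval.volume_def, hemb.comap_apply]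
    exact measure_mono hsub
  have hpos : 0 < volume U := by
    refine lt_of_lt_of_le ?_ hle
    rw [Real.volume_Ioo]
    exact ENNReal.ofReal_pos.2 (by linarith)
  exact ENNReal.toReal_pos hpos.ne' (measure_ne_top _ _)

lemma meas_lt_eq (P : Measure FSp) [IsProbabilityMeasure P]
    (hFcont : ∀ t : unitInterval, Continuous (margF P t)) (t : unitInterval) (y : ℝ) :
    (P {x : FSp | x t < y}).toReal = margF P t y := by
  apply le_antisymm
  · exact ENNReal.toReal_mono (measure_ne_top _ _) (measure_mono fun x hx => show x t ≤ y from le_of_lt hx)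
  · refine le_of_forall_pos_le_add fun ε hε => ?_
    obtain ⟨δ, hδ, hδ'⟩ := Metric.continuous_iff.1 (hFcont t) y ε hε
    have h1 : margF P t (y - δ/2) ≤ (P {x : FSp | x t < y}).toReal :=
      ENNReal.toReal_mono (measure_ne_top _ _)
        (measure_mono fun x hx => by simp only [mem_setOf_eq] at hx ⊢; linarith)
    have h2 := hδ' (y - δ/2) (by rw [Real.dist_eq, show y - δ/2 - y = -(δ/2) by ring,
      abs_neg, abs_of_pos (by linarith)]; linarith)
    rw [Real.dist_eq] at h2
    have h3 := (abs_lt.1 h2).1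
    linarith

lemma meas_gt_eq (P : Measure FSp) [IsProbabilityMeasure P] (t : unitInterval) (y : ℝ) :
    (P {x : FSp | y < x t}).toReal = 1 - margF P t y := by
  have hmeas : Measurable fun x : FSp => x t :=
    (continuous_eval_const t).measurable
  have hm : MeasurableSet {x : FSp | x t ≤ y} := hmeas measurableSet_Iic
  have hcompl : {x : FSp | y < x t} = {x : FSp | x t ≤ y}ᶜ := by
    ext x; simp [not_le]
  rw [hcompl, measure_compl hm (measure_ne_top P _), measure_univ,
    ENNReal.toReal_sub_of_le prob_le_one ENNReal.one_ne_top, ENNReal.toReal_one]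
  rfl

lemma margF_mem (P : Measure FSp) [IsProbabilityMeasure P] (t : unitInterval) (y : ℝ) :
    margF P t y ∈ Icc (0:ℝ) 1 := by
  constructor
  · exact ENNReal.toReal_nonneg
  · have : P {x : FSp | x t ≤ y} ≤ 1 := prob_le_one
    calc margF P t y ≤ (1 : ℝ≥0∞).toReal :=
          ENNReal.toReal_mono ENNReal.one_ne_top this
      _ = 1 := ENNReal.toReal_one

lemma pdepth_eq (P : Measure FSp) [IsProbabilityMeasure P]
    (hFcont : ∀ t : unitInterval, Continuous (margF P t)) (g : unitInterval → ℝ)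
    (t : unitInterval) : pdepth P g t = 1 - |1 - 2 * margF P t (g t)| := by
  unfold pdepth
  rw [meas_gt_eq P t (g t), meas_lt_eq P hFcont t (g t)]
  congr 1
  congr 1
  ring


/-- **Continuity of the pointwise depth and dense-set computation of the
minimal depth level.** -/
theorem pdepth_continuous_dmin_min (P : Measure FSp) [IsProbabilityMeasure P]
    (hFcont : ∀ t : unitInterval, Continuous (margF P t))
    (hequi : ∀ u₀ : ℝ, ∃ ε > 0, ∀ η > 0, ∃ δ > 0,
      ∀ (t s : unitInterval) (u : ℝ), dist t s ≤ δ → |u - u₀| < ε →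
        |margF P t u - margF P s u| ≤ η) :
    ∀ f : FSp,
      Continuous (fun t => pdepth P ⇑f t) ∧
      IsLeast (range fun t => pdepth P ⇑f t) (dmin P ⇑f) ∧
      ∀ T : Set unitInterval, Dense T → dmin P ⇑f = ⨅ t : T, pdepth P ⇑f t := by
  intro f
  -- continuity of t ↦ margF P t (f t)
  have hh : Continuous fun t : unitInterval => margF P t (f t) := by
    rw [continuous_iff_continuousAt]
    intro t₀
    rw [Metric.continuousAt_iff]
    intro η hη
    obtain ⟨ε, hε, hεprop⟩ := hequi (f t₀)
    obtain ⟨δ₁, hδ₁, hδ₁'⟩ := hεprop (η/3) (by linarith)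
    obtain ⟨ε₂, hε₂, hε₂'⟩ := Metric.continuous_iff.1 (hFcont t₀) (f t₀) (η/3) (by linarith)
    obtain ⟨δ₂, hδ₂, hδ₂'⟩ := Metric.continuous_iff.1 f.continuous t₀ (min ε ε₂)
      (lt_min hε hε₂)
    refine ⟨min δ₁ δ₂, lt_min hδ₁ hδ₂, fun {t} ht => ?_⟩
    have hft : dist (f t) (f t₀) < min ε ε₂ :=
      hδ₂' t (lt_of_lt_of_le ht (min_le_right _ _))
    have e1 : |margF P t (f t) - margF P t₀ (f t)| ≤ η/3 := by
      refine hδ₁' t t₀ (f t) (le_of_lt (lt_of_lt_of_le ht (min_le_left _ _))) ?_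
      rw [Real.dist_eq] at hft
      exact lt_of_lt_of_le hft (min_le_left _ _)
    have e2 : dist (margF P t₀ (f t)) (margF P t₀ (f t₀)) < η/3 :=
      hε₂' (f t) (lt_of_lt_of_le hft (min_le_right _ _))
    rw [Real.dist_eq] at e2 ⊢
    have tri : |margF P t (f t) - margF P t₀ (f t₀)| ≤
        |margF P t (f t) - margF P t₀ (f t)| + |margF P t₀ (f t) - margF P t₀ (f t₀)| :=
      abs_sub_le _ _ _
    linarith
  have hDeq : (fun t => pdepth P ⇑f t) = fun t => 1 - |1 - 2 * margF P t (f t)| :=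
    funext fun t => pdepth_eq P hFcont ⇑f t
  have hD : Continuous fun t => pdepth P ⇑f t := by
    rw [hDeq]
    exact continuous_const.sub ((continuous_const.sub (continuous_const.mul hh)).abs)
  -- bounds
  have hbdd : ∀ t, pdepth P ⇑f t ∈ Icc (0:ℝ) 1 := by
    intro t
    rw [pdepth_eq P hFcont ⇑f t]
    obtain ⟨h0, h1⟩ := margF_mem P t (f t)
    constructor
    · have : |1 - 2 * margF P t (f t)| ≤ 1 := abs_le.2 ⟨by linarith, by linarith⟩
      linarith
    · have : (0:ℝ) ≤ |1 - 2 * margF P t (f t)| := abs_nonneg _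
      linarith
  -- minimum
  obtain ⟨t₀, -, ht₀⟩ := isCompact_univ.exists_isMinOn univ_nonempty hD.continuousOn
  have hmin : ∀ t, pdepth P ⇑f t₀ ≤ pdepth P ⇑f t := fun t => ht₀ (mem_univ t)
  set m := pdepth P ⇑f t₀ with hm
  set S := {r ∈ Icc (0:ℝ) 1 | 0 < dcdf P ⇑f r} with hS
  have h1S : (1:ℝ) ∈ S := by
    refine ⟨⟨zero_le_one, le_refl 1⟩, ?_⟩
    have huniv : {t : unitInterval | pdepth P ⇑f t ≤ 1} = univ :=
      eq_univ_of_forall fun t => (hbdd t).2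
    rw [dcdf, huniv, measure_univ, ENNReal.toReal_one]
    exact one_pos
  have hSlb : ∀ r ∈ S, m ≤ r := by
    intro r hr
    by_contra hcon
    push_neg at hcon
    have hempty : {t : unitInterval | pdepth P ⇑f t ≤ r} = ∅ := by
      rw [eq_empty_iff_forall_notMem]
      intro t ht
      exact absurd (le_trans (hmin t) ht) (not_le.2 hcon)
    have hzero : dcdf P ⇑f r = 0 := by rw [dcdf, hempty]; simp
    have h2 := hr.2
    rw [hzero] at h2
    exact lt_irrefl 0 h2
  have hdm : dmin P ⇑f = m := by
    rw [dmin]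
    apply le_antisymm
    · refine le_of_forall_pos_le_add fun ε hε => ?_
      by_cases hcase : m + ε ≤ 1
      · have hrS : m + ε ∈ S := by
          refine ⟨⟨by have := (hbdd t₀).1; linarith, hcase⟩, ?_⟩
          have hopen : IsOpen {t : unitInterval | pdepth P ⇑f t < m + ε} :=
            isOpen_lt hD continuous_const
          have hne : {t : unitInterval | pdepth P ⇑f t < m + ε}.Nonempty :=
            ⟨t₀, by simp only [mem_setOf_eq]; linarith⟩
          have hpos := vol_open_pos hopen hne
          refine lt_of_lt_of_le hpos ?_
          exact ENNReal.toReal_mono (measure_ne_top _ _)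
            (measure_mono fun t ht => show pdepth P ⇑f t ≤ m + ε from le_of_lt ht)
        exact csInf_le ⟨0, fun r hr => hr.1.1⟩ hrS
      · have : sInf S ≤ 1 := csInf_le ⟨0, fun r hr => hr.1.1⟩ h1S
        linarith
    · exact le_csInf ⟨1, h1S⟩ hSlb
  refine ⟨hD, ?_, ?_⟩
  · rw [hdm]
    exact ⟨mem_range_self t₀, fun y hy => by
      obtain ⟨t, rfl⟩ := hy
      exact hmin t⟩
  · intro T hT
    have hTne : T.Nonempty := hT.nonempty
    have hne' : Nonempty T := hTne.to_subtype
    rw [hdm]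
    have hbdd' : BddBelow (range fun t : T => pdepth P ⇑f (t : unitInterval)) := by
      refine ⟨m, ?_⟩
      rintro y ⟨t, rfl⟩
      exact hmin t
    apply le_antisymm
    · exact le_ciInf fun t => hmin t
    · refine le_of_forall_pos_le_add fun ε hε => ?_
      have hopen : IsOpen {t : unitInterval | pdepth P ⇑f t < m + ε} :=
        isOpen_lt hD continuous_const
      have hne : {t : unitInterval | pdepth P ⇑f t < m + ε}.Nonempty :=
        ⟨t₀, by simp only [mem_setOf_eq]; linarith⟩
      obtain ⟨t, htT, htlt⟩ := hT.exists_mem_open hopen hne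
      have : (⨅ t : T, pdepth P ⇑f (t : unitInterval)) ≤ pdepth P ⇑f t :=
        ciInf_le hbdd' ⟨t, htT⟩
      simp only [mem_setOf_eq] at htlt
      linarith
end
end

section
/- Max–min characterization of the sample extremal-depth median: For a Borel measurable h : I → ℝ, set d_h := inf{r ∈ [0,1] : Φ_h(r) > 0}. If g = f_j for some j ∈ {1,…,n} and ED(g) ≥ ED(f_k) for every k ∈ {1,…,n} (i.e., g is a sample extremal-depth median), then d_g = max_{1≤k≤n} d_{f_k}; that is, the sample extremal-depth median maximizes the minimal depth level over the sample. -/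
open MeasureTheory Set Filter

noncomputable section

/-- Pointwise sample depth
`D_g(t) = 1 - |#{i : f_i(t) < g(t)} - #{i : f_i(t) > g(t)}| / n`. -/
def pdepthS {n : ℕ} (f : Fin n → unitInterval → ℝ) (g : unitInterval → ℝ)
    (t : unitInterval) : ℝ :=
  1 - |(({i | f i t < g t} : Set (Fin n)).ncard : ℝ) -
        (({i | g t < f i t} : Set (Fin n)).ncard : ℝ)| / n

/-- Sample d-CDF `Φ_g(r) = Leb{t ∈ I : D_g(t) ≤ r}`. -/
def dcdfS {n : ℕ} (f : Fin n → unitInterval → ℝ) (g : unitInterval → ℝ)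
    (r : ℝ) : ℝ :=
  (volume {t : unitInterval | pdepthS f g t ≤ r}).toReal

/-- The set `R(g,h) = {r ∈ [0,1] : Φ_g(r) ≠ Φ_h(r)}` (sample version). -/
def RsetS {n : ℕ} (f : Fin n → unitInterval → ℝ) (g h : unitInterval → ℝ) :
    Set ℝ :=
  {r ∈ Icc (0:ℝ) 1 | dcdfS f g r ≠ dcdfS f h r}

/-- `g ≺ h` for the sample: `g` is more extreme than `h`. `g ⪰ h` is its
negation. -/
def precS {n : ℕ} (f : Fin n → unitInterval → ℝ) (g h : unitInterval → ℝ) :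
    Prop :=
  (RsetS f g h).Nonempty ∧
  ∃ δ > 0, ∀ r ∈ Ioo (sInf (RsetS f g h)) (sInf (RsetS f g h) + δ) ∩ Icc (0:ℝ) 1,
    dcdfS f h r < dcdfS f g r

/-- Sample extremal depth `ED(g) = #{i : g ⪰ f_i} / n`. -/
def edS {n : ℕ} (f : Fin n → unitInterval → ℝ) (g : unitInterval → ℝ) : ℝ :=
  (({i : Fin n | ¬ precS f g (f i)} : Set (Fin n)).ncard : ℝ) / n

/-- Sample minimal depth level `d_h = inf{r ∈ [0,1] : Φ_h(r) > 0}`. -/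
def dminS {n : ℕ} (f : Fin n → unitInterval → ℝ) (h : unitInterval → ℝ) : ℝ :=
  sInf {r ∈ Icc (0:ℝ) 1 | 0 < dcdfS f h r}

namespace SampleAux

variable {n : ℕ} (f : Fin n → unitInterval → ℝ)

lemma dcdf_nonneg (h : unitInterval → ℝ) (r : ℝ) : 0 ≤ dcdfS f h r :=
  ENNReal.toReal_nonneg

lemma dcdf_mono (h : unitInterval → ℝ) {r s : ℝ} (hrs : r ≤ s) :
    dcdfS f h r ≤ dcdfS f h s := by
  apply ENNReal.toReal_le_toReal (measure_ne_top _ _) (measure_ne_top _ _) |>.mpr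
  exact measure_mono fun t ht => le_trans ht hrs

lemma pdepth_le_one (h : unitInterval → ℝ) (t : unitInterval) :
    pdepthS f h t ≤ 1 := by
  unfold pdepthS
  have : (0:ℝ) ≤ |(({i | f i t < h t} : Set (Fin n)).ncard : ℝ) -
      (({i | h t < f i t} : Set (Fin n)).ncard : ℝ)| / n :=
    div_nonneg (abs_nonneg _) (Nat.cast_nonneg n)
  linarith

lemma dcdf_one (h : unitInterval → ℝ) : dcdfS f h 1 = 1 := by
  unfold dcdfS
  have : {t : unitInterval | pdepthS f h t ≤ 1} = univ :=
    eq_univ_of_forall fun t => pdepth_le_one f h t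
  rw [this, measure_univ, ENNReal.toReal_one]

lemma one_mem (h : unitInterval → ℝ) :
    (1:ℝ) ∈ {r ∈ Icc (0:ℝ) 1 | 0 < dcdfS f h r} :=
  ⟨⟨zero_le_one, le_refl 1⟩, by rw [dcdf_one]; norm_num⟩

lemma S_bddBelow (h : unitInterval → ℝ) :
    BddBelow {r ∈ Icc (0:ℝ) 1 | 0 < dcdfS f h r} :=
  ⟨0, fun r hr => hr.1.1⟩

lemma dmin_nonneg (h : unitInterval → ℝ) : 0 ≤ dminS f h :=
  le_csInf ⟨1, one_mem f h⟩ fun r hr => hr.1.1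

lemma dmin_le_one (h : unitInterval → ℝ) : dminS f h ≤ 1 :=
  csInf_le (S_bddBelow f h) (one_mem f h)

lemma dcdf_eq_zero_of_lt (h : unitInterval → ℝ) {r : ℝ} (hr : r ∈ Icc (0:ℝ) 1)
    (hlt : r < dminS f h) : dcdfS f h r = 0 := by
  by_contra hne
  have hpos : 0 < dcdfS f h r := lt_of_le_of_ne (dcdf_nonneg f h r) (Ne.symm hne)
  exact absurd (csInf_le (S_bddBelow f h) ⟨hr, hpos⟩) (not_le.mpr hlt)

lemma dcdf_pos_of_gt (h : unitInterval → ℝ) {r : ℝ} (hlt : dminS f h < r) :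
    0 < dcdfS f h r := by
  obtain ⟨r', hr', hr'r⟩ := exists_lt_of_csInf_lt ⟨1, one_mem f h⟩ hlt
  exact lt_of_lt_of_le hr'.2 (dcdf_mono f h hr'r.le)

lemma Rset_comm (a b : unitInterval → ℝ) : RsetS f a b = RsetS f b a := by
  ext r; exact and_congr_right fun _ => ne_comm

lemma mem_Rset (a b : unitInterval → ℝ) (hab : dminS f a < dminS f b)
    {r : ℝ} (hr : r ∈ Ioo (dminS f a) (dminS f b)) : r ∈ RsetS f a b := by
  have hIcc : r ∈ Icc (0:ℝ) 1 :=
    ⟨le_trans (dmin_nonneg f a) hr.1.le, le_trans hr.2.le (dmin_le_one f b)⟩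
  refine ⟨hIcc, ?_⟩
  rw [dcdf_eq_zero_of_lt f b hIcc hr.2]
  exact ne_of_gt (dcdf_pos_of_gt f a hr.1)

lemma Rset_nonempty (a b : unitInterval → ℝ) (hab : dminS f a < dminS f b) :
    (RsetS f a b).Nonempty :=
  ⟨(dminS f a + dminS f b) / 2,
    mem_Rset f a b hab ⟨by linarith, by linarith⟩⟩

lemma sInf_Rset (a b : unitInterval → ℝ) (hab : dminS f a < dminS f b) :
    sInf (RsetS f a b) = dminS f a := by
  have hbdd : BddBelow (RsetS f a b) := ⟨0, fun r hr => hr.1.1⟩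
  apply le_antisymm
  · by_contra hcon
    push_neg at hcon
    set r := min (sInf (RsetS f a b)) (dminS f b) with hr
    have hdar : dminS f a < r := lt_min hcon hab
    set r' := (dminS f a + r) / 2 with hr'
    have h1 : dminS f a < r' := by rw [hr']; linarith
    have h2 : r' < r := by rw [hr']; linarith
    have hmem : r' ∈ RsetS f a b :=
      mem_Rset f a b hab ⟨h1, lt_of_lt_of_le h2 (min_le_right _ _)⟩
    have := csInf_le hbdd hmem
    have : sInf (RsetS f a b) ≤ r' := this
    have hrle : r ≤ sInf (RsetS f a b) := min_le_left _ _
    linarith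
  · apply le_csInf (Rset_nonempty f a b hab)
    intro r hr
    by_contra hcon
    push_neg at hcon
    have h1 : dcdfS f a r = 0 := dcdf_eq_zero_of_lt f a hr.1 hcon
    have h2 : dcdfS f b r = 0 :=
      dcdf_eq_zero_of_lt f b hr.1 (lt_trans hcon hab)
    exact hr.2 (h1.trans h2.symm)

lemma prec_of_lt (a b : unitInterval → ℝ) (hab : dminS f a < dminS f b) :
    precS f a b := by
  refine ⟨Rset_nonempty f a b hab, dminS f b - dminS f a, by linarith, ?_⟩
  intro r hr
  rw [sInf_Rset f a b hab] at hr
  obtain ⟨⟨hr1, hr2⟩, hIcc⟩ := hr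
  have hrb : r < dminS f b := by linarith
  rw [dcdf_eq_zero_of_lt f b hIcc hrb]
  exact dcdf_pos_of_gt f a hr1

lemma not_prec_of_lt (a b : unitInterval → ℝ) (hab : dminS f a < dminS f b) :
    ¬ precS f b a := by
  rintro ⟨-, δ, hδ, hforall⟩
  have hinf : sInf (RsetS f b a) = dminS f a := by
    rw [Rset_comm f b a]; exact sInf_Rset f a b hab
  set r := dminS f a + min δ (dminS f b - dminS f a) / 2 with hrdef
  have hmin : 0 < min δ (dminS f b - dminS f a) := lt_min hδ (by linarith)
  have h1 : dminS f a < r := by rw [hrdef]; linarith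
  have h2 : r < dminS f a + δ := by
    have := min_le_left δ (dminS f b - dminS f a)
    rw [hrdef]; linarith
  have h3 : r < dminS f b := by
    have := min_le_right δ (dminS f b - dminS f a)
    rw [hrdef]; linarith
  have hIcc : r ∈ Icc (0:ℝ) 1 :=
    ⟨le_trans (dmin_nonneg f a) h1.le, le_trans h3.le (dmin_le_one f b)⟩
  have := hforall r ⟨⟨by rw [hinf]; exact h1, by rw [hinf]; exact h2⟩, hIcc⟩
  have hz : dcdfS f b r = 0 := dcdf_eq_zero_of_lt f b hIcc h3
  have := lt_of_le_of_lt (dcdf_nonneg f a r) this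
  rw [hz] at this
  exact lt_irrefl 0 this

lemma not_prec_self (h : unitInterval → ℝ) : ¬ precS f h h := by
  rintro ⟨⟨r, hr⟩, -⟩
  exact hr.2 rfl

end SampleAux

/-- **Max–min characterization of the sample extremal-depth median**: a sample
ED median maximizes the minimal depth level `d` over the sample. -/
theorem sample_median_maximin {n : ℕ} (hn : 0 < n)
    (f : Fin n → unitInterval → ℝ) (hf : ∀ i, Measurable (f i))
    (g : unitInterval → ℝ) (j : Fin n) (hgj : g = f j)
    (hmed : ∀ k : Fin n, edS f (f k) ≤ edS f g) :
    IsGreatest (range fun k : Fin n => dminS f (f k)) (dminS f g) := by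
  constructor
  · exact ⟨j, by rw [hgj]⟩
  · rintro x ⟨k, rfl⟩
    by_contra hcon
    push_neg at hcon
    set A := ({i : Fin n | ¬ precS f g (f i)} : Set (Fin n)) with hA
    set B := ({i : Fin n | ¬ precS f (f k) (f i)} : Set (Fin n)) with hB
    have hAB : A ⊆ B := by
      intro i hi
      rcases lt_or_ge (dminS f g) (dminS f (f i)) with h | h
      · exact absurd (SampleAux.prec_of_lt f g (f i) h) hi
      · exact SampleAux.not_prec_of_lt f (f i) (f k) (lt_of_le_of_lt h hcon)
    have hkB : k ∈ B := SampleAux.not_prec_self f (f k)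
    have hkA : k ∉ A := fun hk => hk (SampleAux.prec_of_lt f g (f k) hcon)
    have hss : A ⊂ B := ⟨hAB, fun hBA => hkA (hBA hkB)⟩
    have hcard : A.ncard < B.ncard := Set.ncard_lt_ncard hss (Set.toFinite B)
    have hn' : (0:ℝ) < n := Nat.cast_pos.mpr hn
    have hlt : edS f g < edS f (f k) := by
      unfold edS
      rw [← hA, ← hB]
      gcongr
    linarith [hmed k]
end
end

section
/- Invariance of sample extremal depth under pointwise strictly monotone transformations: Let φ : I × ℝ → ℝ be such that for every t ∈ I the map y ↦ φ(t,y) is either strictly increasing or strictly decreasing. For h : I → ℝ, write Th : I → ℝ for the function (Th)(t) := φ(t, h(t)), and assume Tf_1, …, Tf_n and Tg are Borel measurable. Then for every Borel measurable g : I → ℝ and every t ∈ I, the pointwise sample depth of Tg with respect to the transformed sample (Tf_1, …, Tf_n) equals the pointwise sample depth of g with respect to (f_1, …, f_n); consequently the corresponding d-CDFs coincide, and the sample extremal depth of Tg computed from (Tf_1, …, Tf_n) equals the sample extremal depth of g computed from (f_1, …, f_n). -/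
open MeasureTheory Set Filter

noncomputable section

/- A decreasing `φ t` swaps the counts below and above `g t`, which leaves their
absolute difference unchanged. -/
theorem pdepthS_comp_strictMono_or_strictAnti {n : ℕ} (φ : unitInterval → ℝ → ℝ)
    (hφ : ∀ t, StrictMono (φ t) ∨ StrictAnti (φ t))
    (f : Fin n → unitInterval → ℝ) (g : unitInterval → ℝ) :
    pdepthS (fun i t => φ t (f i t)) (fun t => φ t (g t)) = pdepthS f g := by
  funext t
  rcases hφ t with hmono | hanti
  · simp only [pdepthS, hmono.lt_iff_lt]
  · simp only [pdepthS, hanti.lt_iff_gt]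
    rw [abs_sub_comm]

section

variable {n : ℕ} {f f' : Fin n → unitInterval → ℝ} {g g' h h' : unitInterval → ℝ}

theorem dcdfS_congr (hD : pdepthS f' g' = pdepthS f g) : dcdfS f' g' = dcdfS f g := by
  funext r
  simp only [dcdfS, hD]

theorem precS_congr (hg : dcdfS f' g' = dcdfS f g) (hh : dcdfS f' h' = dcdfS f h) :
    precS f' g' h' ↔ precS f g h := by
  simp only [precS, RsetS, hg, hh]

theorem edS_congr (hprec : ∀ i, precS f' g' (f' i) ↔ precS f g (f i)) :
    edS f' g' = edS f g := by
  simp only [edS, hprec]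

end

theorem sample_ED_monotone_invariance_general {n : ℕ}
    (f : Fin n → unitInterval → ℝ)
    (g : unitInterval → ℝ)
    (φ : unitInterval → ℝ → ℝ)
    (hφ : ∀ t : unitInterval, StrictMono (φ t) ∨ StrictAnti (φ t))
    (T : (unitInterval → ℝ) → unitInterval → ℝ)
    (hT : ∀ (h : unitInterval → ℝ) (t : unitInterval), T h t = φ t (h t)) :
    (∀ t : unitInterval, pdepthS (fun i => T (f i)) (T g) t = pdepthS f g t) ∧
    (∀ r : ℝ, dcdfS (fun i => T (f i)) (T g) r = dcdfS f g r) ∧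
    edS (fun i => T (f i)) (T g) = edS f g := by
  obtain rfl : T = fun h t => φ t (h t) := funext fun h => funext (hT h)
  have hdepth := pdepthS_comp_strictMono_or_strictAnti φ hφ f
  have hdcdf : ∀ h, dcdfS (fun i t => φ t (f i t)) (fun t => φ t (h t)) = dcdfS f h :=
    fun h => dcdfS_congr (hdepth h)
  exact ⟨congrFun (hdepth g), congrFun (hdcdf g),
    edS_congr fun i => precS_congr (hdcdf g) (hdcdf (f i))⟩

/-- **Invariance of sample extremal depth under pointwise strictly monotone
transformations.** -/
theorem sample_ED_monotone_invariance {n : ℕ}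
    (f : Fin n → unitInterval → ℝ) (hf : ∀ i, Measurable (f i))
    (g : unitInterval → ℝ) (hg : Measurable g)
    (φ : unitInterval → ℝ → ℝ)
    (hφ : ∀ t : unitInterval, StrictMono (φ t) ∨ StrictAnti (φ t))
    (T : (unitInterval → ℝ) → unitInterval → ℝ)
    (hT : ∀ (h : unitInterval → ℝ) (t : unitInterval), T h t = φ t (h t))
    (hTf : ∀ i, Measurable (T (f i))) (hTg : Measurable (T g)) :
    (∀ t : unitInterval, pdepthS (fun i => T (f i)) (T g) t = pdepthS f g t) ∧
    (∀ r : ℝ, dcdfS (fun i => T (f i)) (T g) r = dcdfS f g r) ∧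
    edS (fun i => T (f i)) (T g) = edS f g :=
  sample_ED_monotone_invariance_general f g φ hφ T hT
end
end
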